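/- Let 0 < a, 0 < b and a + b < 1, and set τ = 1 − a − b and ā = 1 − a, b̄ = 1 − b. Then (1/τ²)·∫_a^{b̄} ∫_a^{b̄} (min{u, v} − u·v)·Φ⁻¹(u) / (φ(Φ⁻¹(v))·φ(Φ⁻¹(u))) dv du = (1/(2τ²))·[ a·ā·(Φ⁻¹(a))³ + b·b̄·(Φ⁻¹(b̄))³ − a·b·Φ⁻¹(a)·Φ⁻¹(b̄)·(Φ⁻¹(a) + Φ⁻¹(b̄)) − τ·c₁·(a·(Φ⁻¹(a))² + b·(Φ⁻¹(b̄))²) − τ·c₂·(a·Φ⁻¹(a) + b·Φ⁻¹(b̄)) − τ²·c₁·c₂ + τ·c₃ ]. -/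

import Mathlib

open Real MeasureTheory

/-- Standard normal density `φ(x) = (2π)^(−1/2) exp(−x²/2)`. -/
noncomputable def stdPDF (x : ℝ) : ℝ := (Real.sqrt (2 * Real.pi))⁻¹ * Real.exp (-x ^ 2 / 2)

/-- Standard normal cumulative distribution function `Φ(x) = ∫_{−∞}^x φ(u) du`. -/
noncomputable def stdCDF (x : ℝ) : ℝ := ∫ u in Set.Iic x, stdPDF u

/-- Mills hazard `h(γ) = φ(γ)/(1 − Φ(γ))`. -/
noncomputable def millsHazard (γ : ℝ) : ℝ := stdPDF γ / (1 - stdCDF γ)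

/-- The standard normal quantile function `Φ⁻¹`, the inverse of `Φ`. -/
noncomputable def stdQuantile : ℝ → ℝ := Function.invFun stdCDF

/-- Trimmed standard normal quantile moment
`c_k = (1/(1 − a − b)) ∫_a^{1−b} (Φ⁻¹(s))^k ds`. -/
noncomputable def trimMoment (a b : ℝ) (k : ℕ) : ℝ :=
  (1 - a - b)⁻¹ * ∫ s in a..(1 - b), (stdQuantile s) ^ k

/-! Write `Q = Φ⁻¹` and `ψ = φ ∘ Q`. Since `Q' = 1/ψ` and `ψ' = -Q`, every integrand that occurs
has an explicit antiderivative in `s`, `Q s` and `ψ s`. The kernel `min u v - u v` is the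
Green function of `-d²/du²` on `[0, 1]` and `ψ'' = -1/ψ`, so the inner integral is `ψ u` plus an
affine function of `u` fixed by the boundary values at `a` and `1 - b`. The outer integral and
the trimmed moments `c₁, c₂, c₃` are then evaluated by the fundamental theorem of calculus, and
the formula becomes an algebraic identity between boundary terms. -/

open Set Filter Topology ProbabilityTheory

lemma stdPDF_eq_gaussianPDFReal : stdPDF = gaussianPDFReal 0 1 := by
  ext x
  simp [stdPDF, gaussianPDFReal]

lemma stdPDF_pos (x : ℝ) : 0 < stdPDF x := by
  rw [stdPDF_eq_gaussianPDFReal]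
  exact gaussianPDFReal_pos _ _ _ one_ne_zero

@[simp]
lemma stdPDF_ne_zero (x : ℝ) : stdPDF x ≠ 0 :=
  (stdPDF_pos x).ne'

lemma integrable_stdPDF : Integrable stdPDF :=
  stdPDF_eq_gaussianPDFReal ▸ integrable_gaussianPDFReal 0 1

@[fun_prop]
lemma continuous_stdPDF : Continuous stdPDF := by
  unfold stdPDF
  fun_prop

lemma hasDerivAt_stdPDF (x : ℝ) : HasDerivAt stdPDF (-x * stdPDF x) x := by
  have h : HasDerivAt (fun y : ℝ => -y ^ 2 / 2) (-x) x := by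
    simpa [neg_div] using (hasDerivAt_pow 2 x).neg.div_const 2
  exact (h.exp.const_mul (√(2 * π))⁻¹).congr_deriv (by simp only [stdPDF]; ring)

lemma stdCDF_eq_cdf_gaussianReal : stdCDF = cdf (gaussianReal 0 1) := by
  ext x
  rw [cdf_eq_real, measureReal_def, gaussianReal_apply_eq_integral _ one_ne_zero,
    ENNReal.toReal_ofReal (integral_nonneg fun _ => gaussianPDFReal_nonneg _ _ _),
    stdCDF, stdPDF_eq_gaussianPDFReal]

lemma stdCDF_eq_add_integral (x : ℝ) : stdCDF x = stdCDF 0 + ∫ t in (0 : ℝ)..x, stdPDF t := by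
  rw [stdCDF, stdCDF, ← intervalIntegral.integral_Iic_sub_Iic integrable_stdPDF.integrableOn
    integrable_stdPDF.integrableOn]
  ring

lemma hasDerivAt_stdCDF (x : ℝ) : HasDerivAt stdCDF (stdPDF x) x := by
  rw [funext stdCDF_eq_add_integral]
  exact (intervalIntegral.integral_hasDerivAt_right integrable_stdPDF.intervalIntegrable
    (continuous_stdPDF.stronglyMeasurableAtFilter _ _) continuous_stdPDF.continuousAt).const_add _

lemma continuous_stdCDF : Continuous stdCDF :=
  continuous_iff_continuousAt.2 fun x => (hasDerivAt_stdCDF x).continuousAt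

lemma strictMono_stdCDF : StrictMono stdCDF :=
  strictMono_of_hasDerivAt_pos hasDerivAt_stdCDF stdPDF_pos

lemma stdCDF_mem_Ioo (x : ℝ) : stdCDF x ∈ Ioo 0 1 := by
  have h₀ : 0 ≤ stdCDF (x - 1) := stdCDF_eq_cdf_gaussianReal ▸ cdf_nonneg _ _
  have h₁ : stdCDF (x + 1) ≤ 1 := stdCDF_eq_cdf_gaussianReal ▸ cdf_le_one _ _
  exact ⟨h₀.trans_lt (strictMono_stdCDF (by linarith)),
    (strictMono_stdCDF (by linarith)).trans_le h₁⟩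

lemma mem_range_stdCDF {p : ℝ} (hp : p ∈ Ioo 0 1) : p ∈ range stdCDF := by
  have hbot : Tendsto stdCDF atBot (𝓝 0) := stdCDF_eq_cdf_gaussianReal ▸ tendsto_cdf_atBot _
  have htop : Tendsto stdCDF atTop (𝓝 1) := stdCDF_eq_cdf_gaussianReal ▸ tendsto_cdf_atTop _
  exact mem_range_of_exists_le_of_exists_ge continuous_stdCDF
    ((hbot.eventually_lt_const hp.1).exists.imp fun _ => le_of_lt)
    ((htop.eventually_const_lt hp.2).exists.imp fun _ => le_of_lt)

lemma stdCDF_stdQuantile {p : ℝ} (hp : p ∈ Ioo 0 1) : stdCDF (stdQuantile p) = p :=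
  Function.invFun_eq (mem_range_stdCDF hp)

lemma stdQuantile_stdCDF (x : ℝ) : stdQuantile (stdCDF x) = x :=
  Function.leftInverse_invFun strictMono_stdCDF.injective x

lemma strictMonoOn_stdQuantile : StrictMonoOn stdQuantile (Ioo 0 1) := fun p hp q hq hpq =>
  strictMono_stdCDF.lt_iff_lt.1 (by rwa [stdCDF_stdQuantile hp, stdCDF_stdQuantile hq])

lemma image_stdQuantile_Ioo : stdQuantile '' Ioo 0 1 = univ :=
  eq_univ_of_forall fun x => ⟨stdCDF x, stdCDF_mem_Ioo x, stdQuantile_stdCDF x⟩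

lemma continuousAt_stdQuantile {p : ℝ} (hp : p ∈ Ioo 0 1) : ContinuousAt stdQuantile p :=
  continuousAt_of_monotoneOn_of_image_mem_nhds strictMonoOn_stdQuantile.monotoneOn
    (isOpen_Ioo.mem_nhds hp) (by rw [image_stdQuantile_Ioo]; exact univ_mem)

@[fun_prop]
lemma continuousOn_stdQuantile : ContinuousOn stdQuantile (Ioo 0 1) :=
  fun _ hp => (continuousAt_stdQuantile hp).continuousWithinAt

lemma hasDerivAt_stdQuantile {p : ℝ} (hp : p ∈ Ioo 0 1) :
    HasDerivAt stdQuantile (stdPDF (stdQuantile p))⁻¹ p :=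
  (hasDerivAt_stdCDF _).of_local_left_inverse (continuousAt_stdQuantile hp) (stdPDF_ne_zero _)
    (eventually_of_mem (isOpen_Ioo.mem_nhds hp) fun _ => stdCDF_stdQuantile)

lemma hasDerivAt_stdPDF_stdQuantile {p : ℝ} (hp : p ∈ Ioo 0 1) :
    HasDerivAt (fun s => stdPDF (stdQuantile s)) (-stdQuantile p) p :=
  ((hasDerivAt_stdPDF _).comp p (hasDerivAt_stdQuantile hp)).congr_deriv (by field_simp)

lemma integral_eq_sub_of_hasDerivAt_of_uIcc_subset {U : Set ℝ} {F f : ℝ → ℝ} {x y : ℝ}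
    (hxy : uIcc x y ⊆ U) (hF : ∀ s ∈ U, HasDerivAt F (f s) s) (hf : ContinuousOn f U) :
    ∫ s in x..y, f s = F y - F x :=
  intervalIntegral.integral_eq_sub_of_hasDerivAt (fun s hs => hF s (hxy hs))
    ((hf.mono hxy).intervalIntegrable)

section QuantileIntegrals

variable {x y : ℝ} (hxy : uIcc x y ⊆ Ioo 0 1)
include hxy

lemma integral_stdQuantile :
    ∫ s in x..y, stdQuantile s = stdPDF (stdQuantile x) - stdPDF (stdQuantile y) := by
  rw [integral_eq_sub_of_hasDerivAt_of_uIcc_subset (F := fun s => -stdPDF (stdQuantile s)) hxy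
    (fun s hs => (hasDerivAt_stdPDF_stdQuantile hs).neg.congr_deriv (neg_neg _)) (by fun_prop)]
  ring

lemma integral_stdQuantile_sq :
    ∫ s in x..y, stdQuantile s ^ 2 =
      y - x
        - (stdQuantile y * stdPDF (stdQuantile y) - stdQuantile x * stdPDF (stdQuantile x)) := by
  rw [integral_eq_sub_of_hasDerivAt_of_uIcc_subset
    (F := fun s => s - stdQuantile s * stdPDF (stdQuantile s)) hxy
    (fun s hs => ((hasDerivAt_id' s).sub ((hasDerivAt_stdQuantile hs).mul
      (hasDerivAt_stdPDF_stdQuantile hs))).congr_deriv (by field_simp; ring)) (by fun_prop)]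
  ring

lemma integral_stdQuantile_pow_three :
    ∫ s in x..y, stdQuantile s ^ 3 =
      (2 + stdQuantile x ^ 2) * stdPDF (stdQuantile x)
        - (2 + stdQuantile y ^ 2) * stdPDF (stdQuantile y) := by
  rw [integral_eq_sub_of_hasDerivAt_of_uIcc_subset
    (F := fun s => -((2 + stdQuantile s ^ 2) * stdPDF (stdQuantile s))) hxy
    (fun s hs => (((hasDerivAt_stdQuantile hs).pow 2).const_add 2 |>.mul
      (hasDerivAt_stdPDF_stdQuantile hs)).neg.congr_deriv
        (by simp only [Pi.pow_apply]; field_simp; ring)) (by fun_prop)]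
  ring

lemma integral_id_div_stdPDF_stdQuantile :
    ∫ s in x..y, s / stdPDF (stdQuantile s) =
      y * stdQuantile y + stdPDF (stdQuantile y) - (x * stdQuantile x + stdPDF (stdQuantile x)) :=
  integral_eq_sub_of_hasDerivAt_of_uIcc_subset hxy
    (fun s hs => ((hasDerivAt_id' s).mul (hasDerivAt_stdQuantile hs)).add
      (hasDerivAt_stdPDF_stdQuantile hs) |>.congr_deriv (by field_simp; ring))
    (by fun_prop (disch := simp))

lemma integral_one_sub_div_stdPDF_stdQuantile :
    ∫ s in x..y, (1 - s) / stdPDF (stdQuantile s) =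
      (1 - y) * stdQuantile y - stdPDF (stdQuantile y)
        - ((1 - x) * stdQuantile x - stdPDF (stdQuantile x)) :=
  integral_eq_sub_of_hasDerivAt_of_uIcc_subset hxy
    (fun s hs => (((hasDerivAt_id' s).const_sub 1).mul (hasDerivAt_stdQuantile hs)).sub
      (hasDerivAt_stdPDF_stdQuantile hs) |>.congr_deriv (by field_simp; ring))
    (by fun_prop (disch := simp))

lemma integral_stdQuantile_mul_affine_div (α β : ℝ) :
    ∫ s in x..y, stdQuantile s * (stdPDF (stdQuantile s) + α + β * s) / stdPDF (stdQuantile s) =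
      -stdPDF (stdQuantile y) + α * stdQuantile y ^ 2 / 2
          + β * (y * stdQuantile y ^ 2 - y + stdQuantile y * stdPDF (stdQuantile y)) / 2
        - (-stdPDF (stdQuantile x) + α * stdQuantile x ^ 2 / 2
          + β * (x * stdQuantile x ^ 2 - x + stdQuantile x * stdPDF (stdQuantile x)) / 2) := by
  refine integral_eq_sub_of_hasDerivAt_of_uIcc_subset (F := fun s => -stdPDF (stdQuantile s)
    + α * stdQuantile s ^ 2 / 2
    + β * (s * stdQuantile s ^ 2 - s + stdQuantile s * stdPDF (stdQuantile s)) / 2) hxy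
    (fun s hs => ?_) (by fun_prop (disch := simp))
  have hQ := hasDerivAt_stdQuantile hs
  have hψ := hasDerivAt_stdPDF_stdQuantile hs
  refine ((hψ.neg.add ((hQ.pow 2).const_mul α |>.div_const 2)).add
    (((hasDerivAt_id' s |>.mul (hQ.pow 2)).sub (hasDerivAt_id' s) |>.add (hQ.mul hψ)).const_mul β
      |>.div_const 2)).congr_deriv ?_
  simp only [Pi.pow_apply]
  field_simp
  ring

end QuantileIntegrals

lemma integral_min_sub_mul_div_stdPDF_stdQuantile {x y u : ℝ} (hxy : Icc x y ⊆ Ioo 0 1)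
    (hu : u ∈ Icc x y) :
    ∫ v in x..y, (min u v - u * v) / stdPDF (stdQuantile v) =
      stdPDF (stdQuantile u) - (1 - u) * (x * stdQuantile x + stdPDF (stdQuantile x))
        + u * ((1 - y) * stdQuantile y - stdPDF (stdQuantile y)) := by
  have hxu : uIcc x u ⊆ Ioo 0 1 := by
    rw [uIcc_of_le hu.1]; exact (Icc_subset_Icc_right hu.2).trans hxy
  have huy : uIcc u y ⊆ Ioo 0 1 := by
    rw [uIcc_of_le hu.2]; exact (Icc_subset_Icc_left hu.1).trans hxy
  have hint : ∀ {p q : ℝ}, uIcc p q ⊆ Ioo 0 1 →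
      IntervalIntegrable (fun v => (min u v - u * v) / stdPDF (stdQuantile v)) volume p q :=
    fun h => (ContinuousOn.mono (by fun_prop (disch := simp)) h).intervalIntegrable
  have hleft : ∫ v in x..u, (min u v - u * v) / stdPDF (stdQuantile v) =
      (1 - u) * ∫ v in x..u, v / stdPDF (stdQuantile v) := by
    rw [← intervalIntegral.integral_const_mul]
    refine intervalIntegral.integral_congr fun v hv => ?_
    rw [uIcc_of_le hu.1] at hv
    simp only [min_eq_right hv.2]
    ring
  have hright : ∫ v in u..y, (min u v - u * v) / stdPDF (stdQuantile v) =
      u * ∫ v in u..y, (1 - v) / stdPDF (stdQuantile v) := by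
    rw [← intervalIntegral.integral_const_mul]
    refine intervalIntegral.integral_congr fun v hv => ?_
    rw [uIcc_of_le hu.2] at hv
    simp only [min_eq_left hv.1]
    ring
  rw [← intervalIntegral.integral_add_adjacent_intervals (hint hxu) (hint huy), hleft, hright,
    integral_id_div_stdPDF_stdQuantile hxu, integral_one_sub_div_stdPDF_stdQuantile huy]
  ring

/-- The double-integral expression for the second variance-covariance constant `c₂*`. -/
theorem cStar_two_formula (a b : ℝ) (ha : 0 < a) (hb : 0 < b) (hab : a + b < 1) :
    (1 - a - b)⁻¹ ^ 2 *
      ∫ u in a..(1 - b), ∫ v in a..(1 - b),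
        (min u v - u * v) * stdQuantile u /
          (stdPDF (stdQuantile v) * stdPDF (stdQuantile u)) =
    (2 * (1 - a - b) ^ 2)⁻¹ *
      (a * (1 - a) * (stdQuantile a) ^ 3 + b * (1 - b) * (stdQuantile (1 - b)) ^ 3
        - a * b * stdQuantile a * stdQuantile (1 - b) *
            (stdQuantile a + stdQuantile (1 - b))
        - (1 - a - b) * trimMoment a b 1 *
            (a * (stdQuantile a) ^ 2 + b * (stdQuantile (1 - b)) ^ 2)
        - (1 - a - b) * trimMoment a b 2 *
            (a * stdQuantile a + b * stdQuantile (1 - b))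
        - (1 - a - b) ^ 2 * trimMoment a b 1 * trimMoment a b 2
        + (1 - a - b) * trimMoment a b 3) := by
  have hle : a ≤ 1 - b := by linarith
  have hsub : Icc a (1 - b) ⊆ Ioo 0 1 := fun s hs =>
    ⟨ha.trans_le hs.1, hs.2.trans_lt (by linarith)⟩
  have huIcc : uIcc a (1 - b) ⊆ Ioo 0 1 := uIcc_of_le hle ▸ hsub
  set c₁ := a * stdQuantile a + stdPDF (stdQuantile a)
  set c₂ := (1 - (1 - b)) * stdQuantile (1 - b) - stdPDF (stdQuantile (1 - b))
  have hinner : ∀ u ∈ uIcc a (1 - b),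
      ∫ v in a..(1 - b), (min u v - u * v) * stdQuantile u /
          (stdPDF (stdQuantile v) * stdPDF (stdQuantile u)) =
        stdQuantile u * (stdPDF (stdQuantile u) + -c₁ + (c₁ + c₂) * u) /
          stdPDF (stdQuantile u) := fun u hu => by
    calc _ = stdQuantile u / stdPDF (stdQuantile u) *
          ∫ v in a..(1 - b), (min u v - u * v) / stdPDF (stdQuantile v) := by
          rw [← intervalIntegral.integral_const_mul]
          congr 1 with v
          field_simp
      _ = _ := by
          rw [integral_min_sub_mul_div_stdPDF_stdQuantile hsub (uIcc_of_le hle ▸ hu)]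
          ring
  have hτ : 1 - a - b ≠ 0 := by linarith
  simp only [trimMoment, pow_one]
  rw [intervalIntegral.integral_congr hinner, integral_stdQuantile_mul_affine_div huIcc,
    integral_stdQuantile huIcc, integral_stdQuantile_sq huIcc, integral_stdQuantile_pow_three huIcc]
  field_simp
  ring
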